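/- arXiv:1704.00785 — 2 statements merged into one kernel-verified Lean document; each statement's English description precedes it below -/
import Mathlib

section
/- Let κ₋ > κ₊ ≥ 0 and u ∈ ℝ. Define x∞ = 4u(κ₊ − κ₋)/((κ₊ + κ₋)² + 8u²) and z∞ = (κ₊² − κ₋²)/((κ₊ + κ₋)² + 8u²), and set ρ̄ = (1/2)(I + x∞ σx + z∞ σz), a 2×2 matrix. Then ρ̄ is a density matrix and it satisfies −i u [σy, ρ̄] + κ₋ D_{σ₋}(ρ̄) + κ₊ D_{σ₊}(ρ̄) = 0. -/
/-!
A matrix in Bloch form `½(1 + x σx + z σz)` has trace one, and it is positive semidefinite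
as soon as `x² + z² ≤ 1`: its diagonal entries `(1 ± z)/2` are nonnegative and its
determinant is `(1 - x² - z²)/4`. The Lindbladian maps the Bloch form to the Bloch equations
`(u z - Γ x/4) σx - (u x + δ/2 + Γ z/2) σz`, with `Γ = κ₋ + κ₊` and `δ = κ₋ - κ₊`, and
`(x∞, z∞)` is the solution of this linear system. It lies in the Bloch disc because
`δ² ≤ Γ²` for `κ₊, κ₋ ≥ 0`.
-/

open scoped Matrix ComplexOrder

/-- The dissipator `D_X(ρ) = XρX† − (1/2)(X†Xρ + ρX†X)`. -/
noncomputable def dissipator (X ρ : Matrix (Fin 2) (Fin 2) ℂ) :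
    Matrix (Fin 2) (Fin 2) ℂ :=
  X * ρ * Xᴴ - (1 / 2 : ℂ) • (Xᴴ * X * ρ + ρ * (Xᴴ * X))

/- Basis ordering: index `0 = |e⟩`, index `1 = |g⟩`, so `σz|g⟩ = −|g⟩`, `σz|e⟩ = |e⟩`. -/

/-- Pauli matrix `σx`. -/
noncomputable def sigmaX : Matrix (Fin 2) (Fin 2) ℂ := !![0, 1; 1, 0]

/-- Pauli matrix `σy`. -/
noncomputable def sigmaY : Matrix (Fin 2) (Fin 2) ℂ := !![0, -Complex.I; Complex.I, 0]

/-- Pauli matrix `σz`. -/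
noncomputable def sigmaZ : Matrix (Fin 2) (Fin 2) ℂ := !![1, 0; 0, -1]

/-- Lowering operator `σ₋ = |g⟩⟨e|`. -/
noncomputable def sigmaMinus : Matrix (Fin 2) (Fin 2) ℂ := !![0, 0; 1, 0]

/-- Raising operator `σ₊ = |e⟩⟨g|`. -/
noncomputable def sigmaPlus : Matrix (Fin 2) (Fin 2) ℂ := !![0, 1; 0, 0]

open Matrix Complex

theorem Matrix.posSemidef_fin_two {p q : ℝ} {c : ℂ} (hp : 0 ≤ p) (hq : 0 ≤ q)
    (hc : normSq c ≤ p * q) : (!![(p : ℂ), c; star c, (q : ℂ)]).PosSemidef := by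
  refine .of_dotProduct_mulVec_nonneg ?_ fun v ↦ ?_
  · ext i j; fin_cases i <;> fin_cases j <;> simp
  set A := normSq (v 0)
  set B := normSq (v 1)
  set R := (star (v 0) * c * v 1).re
  have hform : star v ⬝ᵥ (!![(p : ℂ), c; star c, (q : ℂ)] *ᵥ v) =
      ((p * A + 2 * R + q * B : ℝ) : ℂ) := by
    apply Complex.ext <;>
      simp [A, B, R, dotProduct, mulVec, Fin.sum_univ_two, normSq_apply] <;> ring
  have hR : R ^ 2 ≤ (p * A) * (q * B) := calc
    R ^ 2 ≤ normSq (star (v 0) * c * v 1) := by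
      rw [normSq_apply]; nlinarith [sq_nonneg (star (v 0) * c * v 1).im]
    _ = A * normSq c * B := by simp [A, B, normSq_mul]
    _ ≤ (p * A) * (q * B) := by
      have := mul_nonneg (normSq_nonneg (v 0)) (normSq_nonneg (v 1))
      nlinarith
  rw [hform, zero_le_real]
  -- AM-GM: `(pA + qB)² ≥ 4 pA qB ≥ 4 R²`
  nlinarith [sq_nonneg (p * A - q * B), mul_nonneg hp (normSq_nonneg (v 0)),
    mul_nonneg hq (normSq_nonneg (v 1))]

noncomputable def blochMatrix (x z : ℝ) : Matrix (Fin 2) (Fin 2) ℂ :=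
  (1 / 2 : ℂ) • (1 + (x : ℂ) • sigmaX + (z : ℂ) • sigmaZ)

theorem blochMatrix_eq (x z : ℝ) :
    blochMatrix x z = !![(((1 + z) / 2 : ℝ) : ℂ), ((x / 2 : ℝ) : ℂ);
      star ((x / 2 : ℝ) : ℂ), (((1 - z) / 2 : ℝ) : ℂ)] := by
  ext i j; fin_cases i <;> fin_cases j <;> simp [blochMatrix, sigmaX, sigmaZ] <;> ring

theorem trace_blochMatrix (x z : ℝ) : (blochMatrix x z).trace = 1 := by
  simp [blochMatrix, sigmaX, sigmaZ, trace_fin_two]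

theorem posSemidef_blochMatrix {x z : ℝ} (h : x ^ 2 + z ^ 2 ≤ 1) :
    (blochMatrix x z).PosSemidef := by
  rw [blochMatrix_eq]
  apply posSemidef_fin_two <;> [skip; skip; rw [normSq_ofReal]] <;> nlinarith

theorem sigmaY_commutator_blochMatrix (x z : ℝ) :
    sigmaY * blochMatrix x z - blochMatrix x z * sigmaY =
      (I * z) • sigmaX - (I * x) • sigmaZ := by
  rw [blochMatrix_eq]
  ext i j; fin_cases i <;> fin_cases j <;> simp [sigmaX, sigmaY, sigmaZ] <;> ring

theorem conjTranspose_sigmaMinus : sigmaMinusᴴ = sigmaPlus := by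
  ext i j; fin_cases i <;> fin_cases j <;> simp [sigmaMinus, sigmaPlus]

theorem conjTranspose_sigmaPlus : sigmaPlusᴴ = sigmaMinus := by
  rw [← conjTranspose_sigmaMinus, conjTranspose_conjTranspose]

theorem dissipator_sigmaMinus_blochMatrix (x z : ℝ) :
    dissipator sigmaMinus (blochMatrix x z) =
      -(x / 4 : ℂ) • sigmaX - ((1 + z) / 2 : ℂ) • sigmaZ := by
  rw [dissipator, conjTranspose_sigmaMinus, blochMatrix_eq]
  ext i j; fin_cases i <;> fin_cases j <;> simp [sigmaMinus, sigmaPlus, sigmaX, sigmaZ] <;> ring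

theorem dissipator_sigmaPlus_blochMatrix (x z : ℝ) :
    dissipator sigmaPlus (blochMatrix x z) =
      -(x / 4 : ℂ) • sigmaX + ((1 - z) / 2 : ℂ) • sigmaZ := by
  rw [dissipator, conjTranspose_sigmaPlus, blochMatrix_eq]
  ext i j; fin_cases i <;> fin_cases j <;> simp [sigmaMinus, sigmaPlus, sigmaX, sigmaZ] <;> ring

noncomputable def lindbladian (u κm κp : ℝ) (ρ : Matrix (Fin 2) (Fin 2) ℂ) :
    Matrix (Fin 2) (Fin 2) ℂ :=
  (-I * (u : ℂ)) • (sigmaY * ρ - ρ * sigmaY) + (κm : ℂ) • dissipator sigmaMinus ρ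
    + (κp : ℂ) • dissipator sigmaPlus ρ

theorem lindbladian_blochMatrix (u κm κp x z : ℝ) :
    lindbladian u κm κp (blochMatrix x z) =
      ((u * z - (κm + κp) * x / 4 : ℝ) : ℂ) • sigmaX
        - ((u * x + (κm - κp) / 2 + (κm + κp) * z / 2 : ℝ) : ℂ) • sigmaZ := by
  rw [lindbladian, sigmaY_commutator_blochMatrix, dissipator_sigmaMinus_blochMatrix,
    dissipator_sigmaPlus_blochMatrix]
  push_cast
  match_scalars
  · linear_combination -(u * z : ℂ) * I_sq
  · linear_combination (u * x : ℂ) * I_sq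

section Stationary

variable (u κm κp : ℝ)

noncomputable def stationaryX : ℝ := 4 * u * (κp - κm) / ((κp + κm) ^ 2 + 8 * u ^ 2)

noncomputable def stationaryZ : ℝ := (κp ^ 2 - κm ^ 2) / ((κp + κm) ^ 2 + 8 * u ^ 2)

variable {u κm κp}

theorem stationaryX_sq_add_stationaryZ_sq_le_one (hκm : 0 ≤ κm) (hκp : 0 ≤ κp) :
    stationaryX u κm κp ^ 2 + stationaryZ u κm κp ^ 2 ≤ 1 := by
  rw [stationaryX, stationaryZ]
  set D := (κp + κm) ^ 2 + 8 * u ^ 2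
  rcases (show 0 ≤ D by positivity).eq_or_lt with hD | hD
  · simp [← hD]
  have hδΓ : (κp - κm) ^ 2 ≤ (κp + κm) ^ 2 := by nlinarith [mul_nonneg hκm hκp]
  rw [div_pow, div_pow, ← add_div, div_le_one (by positivity)]
  calc (4 * u * (κp - κm)) ^ 2 + (κp ^ 2 - κm ^ 2) ^ 2
      = (κp - κm) ^ 2 * (16 * u ^ 2 + (κp + κm) ^ 2) := by ring
    _ ≤ (κp + κm) ^ 2 * (16 * u ^ 2 + (κp + κm) ^ 2) := by gcongr
    _ ≤ D ^ 2 := by nlinarith [sq_nonneg (u ^ 2)]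

theorem lindbladian_blochMatrix_stationary (hΓ : κp + κm ≠ 0) :
    lindbladian u κm κp (blochMatrix (stationaryX u κm κp) (stationaryZ u κm κp)) = 0 := by
  have hx : u * stationaryZ u κm κp - (κm + κp) * stationaryX u κm κp / 4 = 0 := by
    rw [stationaryX, stationaryZ]; field_simp; ring
  have hz :
      u * stationaryX u κm κp + (κm - κp) / 2 + (κm + κp) * stationaryZ u κm κp / 2 = 0 := by
    rw [stationaryX, stationaryZ]; field_simp; ring
  simp [lindbladian_blochMatrix, hx, hz]

end Stationary

/-- for `κ₋ > κ₊ ≥ 0` and `u ∈ ℝ`, the matrix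
`ρ̄ = (1/2)(I + x∞ σx + z∞ σz)` with `x∞ = 4u(κ₊−κ₋)/((κ₊+κ₋)²+8u²)` and
`z∞ = (κ₊²−κ₋²)/((κ₊+κ₋)²+8u²)` is a density matrix and satisfies
`−iu[σy,ρ̄] + κ₋ D_{σ₋}(ρ̄) + κ₊ D_{σ₊}(ρ̄) = 0`. -/
theorem stmt18 (κm κp u : ℝ) (hκ : κp < κm) (hκp : 0 ≤ κp) :
    ((1 / 2 : ℂ) • ((1 : Matrix (Fin 2) (Fin 2) ℂ)
        + ((4 * u * (κp - κm) / ((κp + κm) ^ 2 + 8 * u ^ 2) : ℝ) : ℂ) • sigmaX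
        + (((κp ^ 2 - κm ^ 2) / ((κp + κm) ^ 2 + 8 * u ^ 2) : ℝ) : ℂ) • sigmaZ)).PosSemidef ∧
    ((1 / 2 : ℂ) • ((1 : Matrix (Fin 2) (Fin 2) ℂ)
        + ((4 * u * (κp - κm) / ((κp + κm) ^ 2 + 8 * u ^ 2) : ℝ) : ℂ) • sigmaX
        + (((κp ^ 2 - κm ^ 2) / ((κp + κm) ^ 2 + 8 * u ^ 2) : ℝ) : ℂ) • sigmaZ)).trace = 1 ∧
    (-Complex.I * (u : ℂ)) •
        (sigmaY * ((1 / 2 : ℂ) • ((1 : Matrix (Fin 2) (Fin 2) ℂ)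
            + ((4 * u * (κp - κm) / ((κp + κm) ^ 2 + 8 * u ^ 2) : ℝ) : ℂ) • sigmaX
            + (((κp ^ 2 - κm ^ 2) / ((κp + κm) ^ 2 + 8 * u ^ 2) : ℝ) : ℂ) • sigmaZ))
          - ((1 / 2 : ℂ) • ((1 : Matrix (Fin 2) (Fin 2) ℂ)
            + ((4 * u * (κp - κm) / ((κp + κm) ^ 2 + 8 * u ^ 2) : ℝ) : ℂ) • sigmaX
            + (((κp ^ 2 - κm ^ 2) / ((κp + κm) ^ 2 + 8 * u ^ 2) : ℝ) : ℂ) • sigmaZ)) * sigmaY)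
      + (κm : ℂ) • dissipator sigmaMinus
          ((1 / 2 : ℂ) • ((1 : Matrix (Fin 2) (Fin 2) ℂ)
            + ((4 * u * (κp - κm) / ((κp + κm) ^ 2 + 8 * u ^ 2) : ℝ) : ℂ) • sigmaX
            + (((κp ^ 2 - κm ^ 2) / ((κp + κm) ^ 2 + 8 * u ^ 2) : ℝ) : ℂ) • sigmaZ))
      + (κp : ℂ) • dissipator sigmaPlus
          ((1 / 2 : ℂ) • ((1 : Matrix (Fin 2) (Fin 2) ℂ)
            + ((4 * u * (κp - κm) / ((κp + κm) ^ 2 + 8 * u ^ 2) : ℝ) : ℂ) • sigmaX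
            + (((κp ^ 2 - κm ^ 2) / ((κp + κm) ^ 2 + 8 * u ^ 2) : ℝ) : ℂ) • sigmaZ)) = 0 := by
  have hκm : 0 ≤ κm := hκp.trans hκ.le
  exact ⟨posSemidef_blochMatrix (stationaryX_sq_add_stationaryZ_sq_le_one hκm hκp),
    trace_blochMatrix _ _, lindbladian_blochMatrix_stationary (by linarith)⟩
end

section
/- Let γ > 0 and u ≥ 0, and consider the Lindblad generator on 2×2 complex matrices L(ρ) = u[σ₊ − σ₋, ρ] + γ D_{σ₋}(ρ). Then for every density matrix ρ̄ with L(ρ̄) = 0 one has tr(σz ρ̄) = −γ²/(γ² + 8u²), and every traceless 2×2 matrix Z with −L(Z) = σz ρ̄ − tr(σz ρ̄) ρ̄ satisfies 2 Re( tr(Z σz) ) = 64 γ u² (γ² + 2u²)/(γ² + 8u²)³. -/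
open scoped Matrix ComplexOrder

/-- The Lindblad generator `L(ρ) = u[σ₊ − σ₋, ρ] + γ D_{σ₋}(ρ)`. -/
noncomputable def Lgen (γ u : ℝ) (ρ : Matrix (Fin 2) (Fin 2) ℂ) :
    Matrix (Fin 2) (Fin 2) ℂ :=
  (u : ℂ) • ((sigmaPlus - sigmaMinus) * ρ - ρ * (sigmaPlus - sigmaMinus))
    + (γ : ℂ) • dissipator sigmaMinus ρ

/-- Auxiliary: explicit entrywise form of the Lindblad generator. -/
theorem Lgen_eq_aux (γ u : ℝ) (ρ : Matrix (Fin 2) (Fin 2) ℂ) :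
    Lgen γ u ρ = !![ (u:ℂ)*(ρ 0 1 + ρ 1 0) - γ * ρ 0 0,
                     (u:ℂ)*(ρ 1 1 - ρ 0 0) - γ/2 * ρ 0 1;
                     (u:ℂ)*(ρ 1 1 - ρ 0 0) - γ/2 * ρ 1 0,
                     -((u:ℂ)*(ρ 0 1 + ρ 1 0)) + γ * ρ 0 0 ] := by
  have hct : (!![0, 0; 1, 0] : Matrix (Fin 2) (Fin 2) ℂ)ᴴ = !![0, 1; 0, 0] := by
    ext i j; fin_cases i <;> fin_cases j <;> simp [Matrix.conjTranspose_apply]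
  rw [Matrix.eta_fin_two ρ]
  simp only [Lgen, dissipator, sigmaPlus, sigmaMinus, hct, Matrix.mul_fin_two]
  ext i j
  fin_cases i <;> fin_cases j <;>
    simp [Matrix.cons_val_zero, Matrix.cons_val_one] <;> ring

/-- Auxiliary: explicit form of `σz * ρ`. -/
theorem sz_mul_aux (ρ : Matrix (Fin 2) (Fin 2) ℂ) :
    sigmaZ * ρ = !![ρ 0 0, ρ 0 1; -ρ 1 0, -ρ 1 1] := by
  ext i j
  fin_cases i <;> fin_cases j <;>
    simp [sigmaZ, Matrix.mul_apply, Fin.sum_univ_two]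

/-- Auxiliary: explicit form of `Z * σz`. -/
theorem mul_sz_aux (Z : Matrix (Fin 2) (Fin 2) ℂ) :
    Z * sigmaZ = !![Z 0 0, -Z 0 1; Z 1 0, -Z 1 1] := by
  ext i j
  fin_cases i <;> fin_cases j <;>
    simp [sigmaZ, Matrix.mul_apply, Fin.sum_univ_two]

/-- for `γ > 0`, `u ≥ 0`, every density matrix `ρ̄` with `L(ρ̄) = 0`
satisfies `tr(σz ρ̄) = −γ²/(γ²+8u²)`, and every traceless `Z` with
`−L(Z) = σz ρ̄ − tr(σz ρ̄) ρ̄` satisfies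
`2 Re(tr(Z σz)) = 64 γ u² (γ²+2u²)/(γ²+8u²)³`. -/
theorem stmt19 (γ u : ℝ) (hγ : 0 < γ) (hu : 0 ≤ u)
    (ρbar : Matrix (Fin 2) (Fin 2) ℂ) (hpsd : ρbar.PosSemidef) (htr : ρbar.trace = 1)
    (hstat : Lgen γ u ρbar = 0) :
    (sigmaZ * ρbar).trace = ((-(γ ^ 2) / (γ ^ 2 + 8 * u ^ 2) : ℝ) : ℂ) ∧
    ∀ Z : Matrix (Fin 2) (Fin 2) ℂ, Z.trace = 0 →
      -(Lgen γ u Z) = sigmaZ * ρbar - (sigmaZ * ρbar).trace • ρbar →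
      2 * ((Z * sigmaZ).trace).re
        = 64 * γ * u ^ 2 * (γ ^ 2 + 2 * u ^ 2) / (γ ^ 2 + 8 * u ^ 2) ^ 3 := by
  have hDr : (0:ℝ) < γ ^ 2 + 8 * u ^ 2 := by positivity
  have hDc : (γ:ℂ) ^ 2 + 8 * (u:ℂ) ^ 2 ≠ 0 := by
    have : ((γ ^ 2 + 8 * u ^ 2 : ℝ) : ℂ) ≠ 0 := by exact_mod_cast hDr.ne'
    push_cast at this; exact this
  have hGc : (γ:ℂ) ≠ 0 := by exact_mod_cast hγ.ne'
  rw [Lgen_eq_aux] at hstat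
  have E1 : (u:ℂ) * (ρbar 0 1 + ρbar 1 0) - (γ:ℂ) * ρbar 0 0 = 0 := by
    have := congrFun (congrFun hstat 0) 0; simpa using this
  have E2 : (u:ℂ) * (ρbar 1 1 - ρbar 0 0) - (γ:ℂ)/2 * ρbar 0 1 = 0 := by
    have := congrFun (congrFun hstat 0) 1; simpa using this
  have E3 : (u:ℂ) * (ρbar 1 1 - ρbar 0 0) - (γ:ℂ)/2 * ρbar 1 0 = 0 := by
    have := congrFun (congrFun hstat 1) 0; simpa using this
  have E4 : ρbar 0 0 + ρbar 1 1 = 1 := by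
    simpa [Matrix.trace_fin_two] using htr
  have haD : ρbar 0 0 * ((γ:ℂ) ^ 2 + 8 * (u:ℂ) ^ 2) = 4 * (u:ℂ) ^ 2 := by
    linear_combination (-2*(u:ℂ)) * E2 + (-2*(u:ℂ)) * E3 + (-(γ:ℂ)) * E1 + (4*(u:ℂ)^2) * E4
  have hdD : ρbar 1 1 * ((γ:ℂ) ^ 2 + 8 * (u:ℂ) ^ 2) = (γ:ℂ) ^ 2 + 4 * (u:ℂ) ^ 2 := by
    linear_combination ((γ:ℂ)^2 + 8*(u:ℂ)^2 - 4*(u:ℂ)^2) * E4 + (2*(u:ℂ)) * E2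
      + (2*(u:ℂ)) * E3 + (γ:ℂ) * E1
  have hbD : ρbar 0 1 * ((γ:ℂ) ^ 2 + 8 * (u:ℂ) ^ 2) = 2 * (u:ℂ) * (γ:ℂ) := by
    apply mul_left_cancel₀ hGc
    linear_combination (-2*((γ:ℂ)^2 + 8*(u:ℂ)^2)) * E2 + 2*(u:ℂ) * hdD - 2*(u:ℂ) * haD
  have hcD : ρbar 1 0 * ((γ:ℂ) ^ 2 + 8 * (u:ℂ) ^ 2) = 2 * (u:ℂ) * (γ:ℂ) := by
    apply mul_left_cancel₀ hGc
    linear_combination (-2*((γ:ℂ)^2 + 8*(u:ℂ)^2)) * E3 + 2*(u:ℂ) * hdD - 2*(u:ℂ) * haD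
  have htrZ : (sigmaZ * ρbar).trace = ρbar 0 0 - ρbar 1 1 := by
    rw [sz_mul_aux, Matrix.trace_fin_two]; simp; ring
  have part1 : (sigmaZ * ρbar).trace = ((-(γ ^ 2) / (γ ^ 2 + 8 * u ^ 2) : ℝ) : ℂ) := by
    rw [htrZ]
    have hcast : ((-(γ ^ 2) / (γ ^ 2 + 8 * u ^ 2) : ℝ) : ℂ)
        = -((γ:ℂ)^2) / ((γ:ℂ)^2 + 8*(u:ℂ)^2) := by push_cast; ring
    rw [hcast, eq_div_iff hDc]
    linear_combination haD - hdD
  refine ⟨part1, ?_⟩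
  intro Z hZ0 hZeq
  have hZs : Z 0 0 + Z 1 1 = 0 := by simpa [Matrix.trace_fin_two] using hZ0
  rw [htrZ, Lgen_eq_aux, sz_mul_aux] at hZeq
  have h1 := congrFun (congrFun hZeq 0) 0
  have h2 := congrFun (congrFun hZeq 0) 1
  have h3 := congrFun (congrFun hZeq 1) 0
  simp only [Matrix.sub_apply, Matrix.smul_apply, Matrix.neg_apply, smul_eq_mul,
    Matrix.cons_val', Matrix.cons_val_zero, Matrix.cons_val_one, Matrix.head_cons,
    Matrix.head_fin_const, Matrix.empty_val', Matrix.cons_val_fin_one, Matrix.of_apply,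
    neg_sub] at h1 h2 h3
  -- cleared-denominator versions
  have F1 : ((γ:ℂ) * Z 0 0 - (u:ℂ) * (Z 0 1 + Z 1 0)) * ((γ:ℂ)^2 + 8*(u:ℂ)^2)^2
      = 8*(u:ℂ)^2*((γ:ℂ)^2 + 4*(u:ℂ)^2) := by
    linear_combination ((γ:ℂ)^2 + 8*(u:ℂ)^2)^2 * h1
      + (((γ:ℂ)^2 + 8*(u:ℂ)^2) - (ρbar 0 0 * ((γ:ℂ)^2 + 8*(u:ℂ)^2) + 4*(u:ℂ)^2)
          + ρbar 1 1 * ((γ:ℂ)^2 + 8*(u:ℂ)^2)) * haD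
      + (4*(u:ℂ)^2) * hdD
  have F2 : ((γ:ℂ)/2 * Z 0 1 - (u:ℂ) * (Z 1 1 - Z 0 0)) * ((γ:ℂ)^2 + 8*(u:ℂ)^2)^2
      = 4*(u:ℂ)*(γ:ℂ)*((γ:ℂ)^2 + 4*(u:ℂ)^2) := by
    linear_combination ((γ:ℂ)^2 + 8*(u:ℂ)^2)^2 * h2
      + (2*(γ:ℂ)^2 + 8*(u:ℂ)^2) * hbD
      + (-(ρbar 0 1 * ((γ:ℂ)^2 + 8*(u:ℂ)^2))) * haD
      + (ρbar 0 1 * ((γ:ℂ)^2 + 8*(u:ℂ)^2)) * hdD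
  have F3 : ((γ:ℂ)/2 * Z 1 0 - (u:ℂ) * (Z 1 1 - Z 0 0)) * ((γ:ℂ)^2 + 8*(u:ℂ)^2)^2
      = -(16*(u:ℂ)^3*(γ:ℂ)) := by
    linear_combination ((γ:ℂ)^2 + 8*(u:ℂ)^2)^2 * h3
      + (-8*(u:ℂ)^2) * hcD
      + (-(ρbar 1 0 * ((γ:ℂ)^2 + 8*(u:ℂ)^2))) * haD
      + (ρbar 1 0 * ((γ:ℂ)^2 + 8*(u:ℂ)^2)) * hdD
  have hp : Z 0 0 * ((γ:ℂ)^2 + 8*(u:ℂ)^2)^3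
      = 16*(u:ℂ)^2*(γ:ℂ)*((γ:ℂ)^2 + 2*(u:ℂ)^2) := by
    linear_combination (γ:ℂ) * F1 + (2*(u:ℂ)) * F2 + (2*(u:ℂ)) * F3
      + (4*(u:ℂ)^2*((γ:ℂ)^2 + 8*(u:ℂ)^2)^2) * hZs
  have hz : Z 0 0 = ((16 * γ * u^2 * (γ^2 + 2*u^2) / (γ^2 + 8*u^2)^3 : ℝ) : ℂ) := by
    have hcast : ((16 * γ * u^2 * (γ^2 + 2*u^2) / (γ^2 + 8*u^2)^3 : ℝ) : ℂ)
        = 16*(u:ℂ)^2*(γ:ℂ)*((γ:ℂ)^2 + 2*(u:ℂ)^2) / ((γ:ℂ)^2 + 8*(u:ℂ)^2)^3 := by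
      push_cast; ring
    rw [hcast, eq_div_iff (pow_ne_zero 3 hDc)]
    exact hp
  have htrZ2 : (Z * sigmaZ).trace = Z 0 0 - Z 1 1 := by
    rw [mul_sz_aux, Matrix.trace_fin_two]; simp; ring
  have hz11 : Z 1 1 = -Z 0 0 := by linear_combination hZs
  rw [htrZ2, hz11, hz]
  rw [sub_neg_eq_add, ← Complex.ofReal_add, Complex.ofReal_re]
  have h3ne : (γ^2 + 8*u^2)^3 ≠ 0 := by positivity
  field_simp
  ring
end
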